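/- Let H = (ℂ²)^{⊗4}, let |0_L⟩ = (|0000⟩ + |1111⟩)/√2 and |1_L⟩ = (|0011⟩ + |1100⟩)/√2, and let P := |0_L⟩⟨0_L| + |1_L⟩⟨1_L| be the projector onto the 4-qubit amplitude-damping code. Let γ ∈ (0,1), E₀ := diag(1, √(1−γ)), E₁ := √γ |0⟩⟨1|, and define the five leading Kraus operators of the four-qubit amplitude damping channel: A₀ := E₀^{⊗4} and, for k ∈ {1,2,3,4}, A_k := the tensor product with E₁ in the k-th factor and E₀ in the other three factors. Then for all k ≠ l in {0,1,2,3,4}, P A_k† A_l P = 0. -/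

import Mathlib

open Matrix BigOperators
open scoped Kronecker

namespace FourQubitAD

abbrev Q4 := Fin 2 × Fin 2 × Fin 2 × Fin 2

/-- Four-fold tensor (Kronecker) product of one-qubit operators. -/
def kron4 (A B C D : Matrix (Fin 2) (Fin 2) ℂ) : Matrix Q4 Q4 ℂ :=
  A ⊗ₖ (B ⊗ₖ (C ⊗ₖ D))

/-- Computational basis vector of `(ℂ²)^{⊗4}`. -/
def basis4 (a b c d : Fin 2) : Q4 → ℂ :=
  fun q => if q = (a, b, c, d) then 1 else 0

/-- The logical codeword `|0_L⟩ = (|0000⟩ + |1111⟩)/√2`. -/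
noncomputable def zeroL : Q4 → ℂ :=
  ((Real.sqrt 2 : ℂ))⁻¹ • (basis4 0 0 0 0 + basis4 1 1 1 1)

/-- The logical codeword `|1_L⟩ = (|0011⟩ + |1100⟩)/√2`. -/
noncomputable def oneL : Q4 → ℂ :=
  ((Real.sqrt 2 : ℂ))⁻¹ • (basis4 0 0 1 1 + basis4 1 1 0 0)

/-- The projector `P = |0_L⟩⟨0_L| + |1_L⟩⟨1_L|` onto the 4-qubit
amplitude-damping code. -/
noncomputable def P : Matrix Q4 Q4 ℂ :=
  vecMulVec zeroL (star zeroL) + vecMulVec oneL (star oneL)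

/-- The no-damping Kraus operator `E₀` of amplitude damping with strength `γ`. -/
noncomputable def E0 (γ : ℝ) : Matrix (Fin 2) (Fin 2) ℂ :=
  !![1, 0; 0, (Real.sqrt (1 - γ) : ℂ)]

/-- The damping Kraus operator `E₁ = √γ |0⟩⟨1|`. -/
noncomputable def E1 (γ : ℝ) : Matrix (Fin 2) (Fin 2) ℂ :=
  !![0, (Real.sqrt γ : ℂ); 0, 0]

/-- The five leading Kraus operators of the four-qubit amplitude damping channel:
`A 0 = E₀^{⊗4}` and, for `k ∈ {1,2,3,4}`, `A k` has `E₁` in the `k`-th factor and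
`E₀` elsewhere. -/
noncomputable def A (γ : ℝ) : Fin 5 → Matrix Q4 Q4 ℂ :=
  ![kron4 (E0 γ) (E0 γ) (E0 γ) (E0 γ),
    kron4 (E1 γ) (E0 γ) (E0 γ) (E0 γ),
    kron4 (E0 γ) (E1 γ) (E0 γ) (E0 γ),
    kron4 (E0 γ) (E0 γ) (E1 γ) (E0 γ),
    kron4 (E0 γ) (E0 γ) (E0 γ) (E1 γ)]

/-! ### Auxiliary lemmas -/

lemma kron4_conjTranspose (A B C D : Matrix (Fin 2) (Fin 2) ℂ) :
    (kron4 A B C D)ᴴ = kron4 Aᴴ Bᴴ Cᴴ Dᴴ := by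
  ext ⟨a,b,c,d⟩ ⟨e,f,g,h⟩
  simp only [kron4, kroneckerMap_apply, conjTranspose_apply, star_mul']
  try ring

lemma kron4_mul (A B C D A' B' C' D' : Matrix (Fin 2) (Fin 2) ℂ) :
    kron4 A B C D * kron4 A' B' C' D' = kron4 (A*A') (B*B') (C*C') (D*D') := by
  simp only [kron4, ← mul_kronecker_mul]

lemma kron4_apply' (A B C D : Matrix (Fin 2) (Fin 2) ℂ) (x y : Q4) :
    kron4 A B C D x y =
      A x.1 y.1 * (B x.2.1 y.2.1 * (C x.2.2.1 y.2.2.1 * D x.2.2.2 y.2.2.2)) := rfl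

lemma hG00 (γ : ℝ) : (E0 γ)ᴴ * (E0 γ) = !![1, 0; 0, ((Real.sqrt (1-γ):ℂ))^2] := by
  ext i j
  fin_cases i <;> fin_cases j <;>
    simp [E0, mul_apply, Fin.sum_univ_two, sq]

lemma hG01 (γ : ℝ) : (E0 γ)ᴴ * (E1 γ) = !![0, (Real.sqrt γ:ℂ); 0, 0] := by
  ext i j
  fin_cases i <;> fin_cases j <;>
    simp [E0, E1, mul_apply, Fin.sum_univ_two]

lemma hG10 (γ : ℝ) : (E1 γ)ᴴ * (E0 γ) = !![0, 0; (Real.sqrt γ:ℂ), 0] := by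
  ext i j
  fin_cases i <;> fin_cases j <;>
    simp [E0, E1, mul_apply, Fin.sum_univ_two]

lemma hG11 (γ : ℝ) : (E1 γ)ᴴ * (E1 γ) = !![0, 0; 0, ((Real.sqrt γ:ℂ))^2] := by
  ext i j
  fin_cases i <;> fin_cases j <;>
    simp [E1, mul_apply, Fin.sum_univ_two, sq]

/-- Indices of the four computational basis states spanning the code. -/
def codeIdx : Fin 4 → Q4 := ![(0,0,0,0),(1,1,1,1),(0,0,1,1),(1,1,0,0)]

set_option maxHeartbeats 1000000 in
lemma entry_zero (γ : ℝ) (k l : Fin 5) (hkl : k ≠ l) (i j : Fin 4) :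
    ((A γ k)ᴴ * A γ l) (codeIdx i) (codeIdx j) = 0 := by
  fin_cases k <;> fin_cases l <;>
    first
      | exact absurd rfl hkl
      | · simp [A, kron4_conjTranspose, kron4_mul, hG00, hG01, hG10, hG11]
          fin_cases i <;> fin_cases j <;> norm_num [codeIdx, kron4_apply']

lemma basis4_eq (a b c d : Fin 2) :
    basis4 a b c d = Pi.single ((a, b, c, d) : Q4) (1 : ℂ) := by
  funext q
  simp [basis4, Pi.single_apply, eq_comm]

lemma vmv_mul (u a : Q4 → ℂ) (M : Matrix Q4 Q4 ℂ) :
    vecMulVec u a * M = vecMulVec u (a ᵥ* M) := by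
  ext i j
  simp only [mul_apply, vecMulVec_apply, vecMul, dotProduct, Finset.mul_sum]
  exact Finset.sum_congr rfl (fun x _ => by ring)

lemma vmv_vmv (u w v b : Q4 → ℂ) :
    vecMulVec u w * vecMulVec v b = (w ⬝ᵥ v) • vecMulVec u b := by
  ext i j
  simp only [mul_apply, vecMulVec_apply, Matrix.smul_apply, smul_eq_mul, dotProduct,
    Finset.sum_mul]
  exact Finset.sum_congr rfl (fun y _ => by ring)

lemma sandwich (u v a b : Q4 → ℂ) (M : Matrix Q4 Q4 ℂ) (h : a ⬝ᵥ (M *ᵥ v) = 0) :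
    vecMulVec u a * M * vecMulVec v b = 0 := by
  rw [vmv_mul, vmv_vmv]
  rw [Matrix.dotProduct_mulVec] at h
  rw [h, zero_smul]

lemma dot_expand (M : Matrix Q4 Q4 ℂ) (c d : ℂ) (p1 p2 q1 q2 : Q4) :
    (c • (Pi.single p1 (1:ℂ) + Pi.single p2 1)) ⬝ᵥ
        (M *ᵥ (d • (Pi.single q1 (1:ℂ) + Pi.single q2 1)))
      = c * d * (M p1 q1 + M p1 q2 + M p2 q1 + M p2 q2) := by
  simp only [mulVec_smul, mulVec_add, mulVec_single, smul_dotProduct, add_dotProduct,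
    single_dotProduct, Pi.smul_apply, Pi.add_apply, smul_eq_mul, mul_one, one_mul,
    MulOpposite.op_one, one_smul, Matrix.col_apply]
  ring

lemma star_zeroL : star zeroL = zeroL := by
  funext q
  simp only [zeroL, basis4, Pi.star_apply, Pi.smul_apply, Pi.add_apply, smul_eq_mul,
    Complex.star_def, _root_.map_mul, map_inv₀, Complex.conj_ofReal, _root_.map_add,
    apply_ite (starRingEnd ℂ), _root_.map_one, _root_.map_zero]

lemma star_oneL : star oneL = oneL := by
  funext q
  simp only [oneL, basis4, Pi.star_apply, Pi.smul_apply, Pi.add_apply, smul_eq_mul,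
    Complex.star_def, _root_.map_mul, map_inv₀, Complex.conj_ofReal, _root_.map_add,
    apply_ite (starRingEnd ℂ), _root_.map_one, _root_.map_zero]

lemma zeroL_eq :
    zeroL = ((Real.sqrt 2 : ℂ))⁻¹ •
      (Pi.single (codeIdx 0) (1:ℂ) + Pi.single (codeIdx 1) 1) := by
  rw [zeroL, basis4_eq, basis4_eq]; rfl

lemma oneL_eq :
    oneL = ((Real.sqrt 2 : ℂ))⁻¹ •
      (Pi.single (codeIdx 2) (1:ℂ) + Pi.single (codeIdx 3) 1) := by
  rw [oneL, basis4_eq, basis4_eq]; rfl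

set_option maxHeartbeats 1600000 in
/-- on the 4-qubit amplitude-damping code, the five leading Kraus
operators of the four-qubit amplitude damping channel are mutually orthogonal:
`P (A k)† (A l) P = 0` for all `k ≠ l`. -/
theorem fourQubit_leading_errors_orthogonal
    (γ : ℝ) (hγ0 : 0 < γ) (hγ1 : γ < 1) :
    ∀ k l : Fin 5, k ≠ l → P * (A γ k)ᴴ * A γ l * P = 0 := by
  intro k l hkl
  have hE := entry_zero γ k l hkl
  have hd : ∀ (i₁ i₂ j₁ j₂ : Fin 4),
      (((Real.sqrt 2 : ℂ))⁻¹ •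
          (Pi.single (codeIdx i₁) (1:ℂ) + Pi.single (codeIdx i₂) 1)) ⬝ᵥ
        (((A γ k)ᴴ * A γ l) *ᵥ (((Real.sqrt 2 : ℂ))⁻¹ •
          (Pi.single (codeIdx j₁) (1:ℂ) + Pi.single (codeIdx j₂) 1))) = 0 := by
    intro i₁ i₂ j₁ j₂
    rw [dot_expand, hE, hE, hE, hE]; ring
  have h00 : vecMulVec zeroL (star zeroL) * ((A γ k)ᴴ * A γ l) * vecMulVec zeroL (star zeroL) = 0 :=
    sandwich _ _ _ _ _ (by rw [star_zeroL, zeroL_eq]; exact hd 0 1 0 1)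
  have h01 : vecMulVec zeroL (star zeroL) * ((A γ k)ᴴ * A γ l) * vecMulVec oneL (star oneL) = 0 :=
    sandwich _ _ _ _ _ (by rw [star_zeroL, zeroL_eq, oneL_eq]; exact hd 0 1 2 3)
  have h10 : vecMulVec oneL (star oneL) * ((A γ k)ᴴ * A γ l) * vecMulVec zeroL (star zeroL) = 0 :=
    sandwich _ _ _ _ _ (by rw [star_oneL, oneL_eq, zeroL_eq]; exact hd 2 3 0 1)
  have h11 : vecMulVec oneL (star oneL) * ((A γ k)ᴴ * A γ l) * vecMulVec oneL (star oneL) = 0 :=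
    sandwich _ _ _ _ _ (by rw [star_oneL, oneL_eq]; exact hd 2 3 2 3)
  have hPM : P * (A γ k)ᴴ * A γ l * P = P * ((A γ k)ᴴ * A γ l) * P := by
    rw [← mul_assoc, mul_assoc P]
  rw [hPM, P]; simp only [add_mul, mul_add]; rw [h00, h01, h10, h11]
  simp

end FourQubitAD
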